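/- Let a be a real number with 1/2 < a < 1. Then there exists a constant C > 0 (depending only on a) such that for every ε ∈ (0, 1/2) and every arc I of the circle (equivalently every interval of polar angles) one has ∑ ‖ξ‖^{-a} ≤ C·( ε^{a−2}·|I| + ε^{a−1}·log(1/ε) + ε^{a−1}·|I|^{-1} ), where the sum runs over primitive lattice vectors ξ ∈ ℤ² with 0 < ‖ξ‖ ≤ 1/(2ε) whose polar angle lies in I, and |I| denotes the length of the arc I. -/

import Mathlib

/-!
Cut the sector into dyadic shells `2 ^ j ≤ ‖ξ‖ < 2 ^ (j + 1)`. Seen in the frame turned by `β`,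
the part of a sector of radius `r` and opening `w ≤ 1` lies in an `r × r w` rectangle, and
distinct lattice points are `1`-separated, so the shell of radius `t = 2 ^ j` holds `O(t² w + t)`
points, each contributing at most `t ^ (-a)`. Summing the two geometric series up to
`2 ^ j ≤ 1 / (2 ε)` gives `O(w ε ^ (a - 2) + ε ^ (a - 1))`, and `log (1 / ε) ≥ log 2`.
-/

/-- The Euclidean norm of a lattice vector `ξ = (p,q) ∈ ℤ²`. -/
noncomputable def znorm (ξ : ℤ × ℤ) : ℝ := Real.sqrt ((ξ.1 : ℝ) ^ 2 + (ξ.2 : ℝ) ^ 2)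

/-- A primitive lattice vector: nonzero with coprime coordinates. -/
def IsPrimitive (ξ : ℤ × ℤ) : Prop := ξ ≠ 0 ∧ Int.gcd ξ.1 ξ.2 = 1

open Real Finset

lemma znorm_nonneg (ξ : ℤ × ℤ) : 0 ≤ znorm ξ := sqrt_nonneg _

lemma one_le_znorm {ξ : ℤ × ℤ} (h : ξ ≠ 0) : 1 ≤ znorm ξ := by
  have hsq : (1 : ℤ) ≤ ξ.1 ^ 2 + ξ.2 ^ 2 := by
    rcases ξ with ⟨p, q⟩
    rcases not_and_or.mp (fun hpq : p = 0 ∧ q = 0 => h (by simp [hpq])) with hp | hq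
    · nlinarith [Int.one_le_abs hp, sq_abs p, sq_nonneg q]
    · nlinarith [Int.one_le_abs hq, sq_abs q, sq_nonneg p]
  exact one_le_sqrt.mpr (by exact_mod_cast hsq)

lemma abs_fst_le_znorm (ξ : ℤ × ℤ) : |(ξ.1 : ℝ)| ≤ znorm ξ :=
  abs_le_sqrt (le_add_of_nonneg_right (sq_nonneg _))

lemma abs_snd_le_znorm (ξ : ℤ × ℤ) : |(ξ.2 : ℝ)| ≤ znorm ξ :=
  abs_le_sqrt (le_add_of_nonneg_left (sq_nonneg _))

lemma one_le_dist_sq {ξ η : ℤ × ℤ} (h : ξ ≠ η) :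
    1 ≤ ((ξ.1 : ℝ) - η.1) ^ 2 + ((ξ.2 : ℝ) - η.2) ^ 2 := by
  have := one_le_znorm (sub_ne_zero.mpr h)
  rw [znorm, one_le_sqrt] at this
  simpa using this

lemma finite_setOf_znorm_le (r : ℝ) : {ξ : ℤ × ℤ | znorm ξ ≤ r}.Finite := by
  have hcoord : ∀ n : ℤ, |(n : ℝ)| ≤ r → n ∈ Set.Icc (-⌈r⌉) ⌈r⌉ := fun n hn =>
    abs_le.mp (by exact_mod_cast hn.trans (Int.le_ceil r))
  refine ((Set.finite_Icc (-⌈r⌉) ⌈r⌉).prod (Set.finite_Icc (-⌈r⌉) ⌈r⌉)).subset fun ξ hξ => ?_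
  exact ⟨hcoord _ ((abs_fst_le_znorm ξ).trans hξ), hcoord _ ((abs_snd_le_znorm ξ).trans hξ)⟩

lemma abs_sub_lt_one_of_natFloor_eq {x y : ℝ} (hx : 0 ≤ x) (hy : 0 ≤ y) (h : ⌊x⌋₊ = ⌊y⌋₊) :
    |x - y| < 1 := by
  apply Int.abs_sub_lt_one_of_floor_eq_floor
  rw [← Int.natCast_floor_eq_floor hx, ← Int.natCast_floor_eq_floor hy, h]

noncomputable def rotate (β : ℝ) (ξ : ℤ × ℤ) : ℝ × ℝ :=
  (ξ.1 * cos β + ξ.2 * sin β, -ξ.1 * sin β + ξ.2 * cos β)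

lemma rotate_dist_sq (β : ℝ) (ξ η : ℤ × ℤ) :
    ((rotate β ξ).1 - (rotate β η).1) ^ 2 + ((rotate β ξ).2 - (rotate β η).2) ^ 2 =
      ((ξ.1 : ℝ) - η.1) ^ 2 + ((ξ.2 : ℝ) - η.2) ^ 2 := by
  simp only [rotate]
  linear_combination (((ξ.1 : ℝ) - η.1) ^ 2 + ((ξ.2 : ℝ) - η.2) ^ 2) * sin_sq_add_cos_sq β

lemma rotate_eq_of_polar {ξ : ℤ × ℤ} {θ : ℝ} (hx : (ξ.1 : ℝ) = znorm ξ * cos θ)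
    (hy : (ξ.2 : ℝ) = znorm ξ * sin θ) (β : ℝ) :
    rotate β ξ = (znorm ξ * cos (θ - β), znorm ξ * sin (θ - β)) := by
  simp only [rotate, hx, hy, cos_sub, sin_sub]
  ext <;> ring

/-- Distinct lattice points are at distance `≥ 1` in every rotated frame, so each cell of side
`1/2` of the rectangle holds at most one of them. -/
lemma card_le_of_rotate_mem_rectangle (β x₀ y₀ : ℝ) {X Y : ℝ} (hX : 0 ≤ X) (hY : 0 ≤ Y)
    (F : Finset (ℤ × ℤ))
    (hF : ∀ ξ ∈ F, (rotate β ξ).1 ∈ Set.Icc x₀ (x₀ + X) ∧ (rotate β ξ).2 ∈ Set.Icc y₀ (y₀ + Y)) :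
    (#F : ℝ) ≤ (2 * X + 1) * (2 * Y + 1) := by
  let cell : ℤ × ℤ → ℕ × ℕ := fun ξ =>
    (⌊2 * ((rotate β ξ).1 - x₀)⌋₊, ⌊2 * ((rotate β ξ).2 - y₀)⌋₊)
  have hmaps : Set.MapsTo cell F ↑(range (⌊2 * X⌋₊ + 1) ×ˢ range (⌊2 * Y⌋₊ + 1)) := by
    intro ξ hξ
    obtain ⟨⟨-, hu⟩, ⟨-, hv⟩⟩ := hF ξ hξ
    simp only [coe_product, Set.mem_prod, mem_coe, mem_range, Nat.lt_succ_iff, cell]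
    exact ⟨Nat.floor_mono (by linarith), Nat.floor_mono (by linarith)⟩
  have hinj : Set.InjOn cell F := by
    intro ξ hξ η hη hcell
    by_contra hne
    obtain ⟨⟨hu, -⟩, ⟨hv, -⟩⟩ := hF ξ hξ
    obtain ⟨⟨hu', -⟩, ⟨hv', -⟩⟩ := hF η hη
    have h1 := abs_sub_lt_one_of_natFloor_eq (by linarith) (by linarith) (congrArg Prod.fst hcell)
    have h2 := abs_sub_lt_one_of_natFloor_eq (by linarith) (by linarith) (congrArg Prod.snd hcell)
    rw [abs_lt] at h1 h2
    have := one_le_dist_sq hne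
    rw [← rotate_dist_sq β] at this
    nlinarith
  have hcard := card_le_card_of_injOn cell hmaps hinj
  rw [card_product, card_range, card_range] at hcard
  calc (#F : ℝ) ≤ (⌊2 * X⌋₊ + 1) * (⌊2 * Y⌋₊ + 1) := by exact_mod_cast hcard
    _ ≤ (2 * X + 1) * (2 * Y + 1) := by
      gcongr <;> exact Nat.floor_le (by positivity)

def latticeSector (β w r : ℝ) : Set (ℤ × ℤ) :=
  {ξ | ξ ≠ 0 ∧ znorm ξ ≤ r ∧ ∃ θ : ℝ, β ≤ θ ∧ θ ≤ β + w ∧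
    (ξ.1 : ℝ) = znorm ξ * cos θ ∧ (ξ.2 : ℝ) = znorm ξ * sin θ}

lemma card_le_of_subset_latticeSector {β w r : ℝ} (hw : 0 < w) (hr : 0 ≤ r) (F : Finset (ℤ × ℤ))
    (hF : ↑F ⊆ latticeSector β w r) : (#F : ℝ) ≤ (4 * r + 1) * (4 * r * w + 1) := by
  have hrot : ∀ ξ ∈ F, znorm ξ ≤ r ∧ ∃ δ ∈ Set.Icc 0 w,
      rotate β ξ = (znorm ξ * cos δ, znorm ξ * sin δ) := by
    intro ξ hξ
    obtain ⟨-, hle, θ, hθ₁, hθ₂, hx, hy⟩ := hF hξ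
    exact ⟨hle, θ - β, ⟨by linarith, by linarith⟩, rotate_eq_of_polar hx hy β⟩
  rcases le_or_gt w 1 with hw1 | hw1
  · -- a sector of angle `w ≤ 1 < π / 2` lies in the rectangle `[0, r] × [0, r w]` of its own frame
    calc (#F : ℝ) ≤ (2 * r + 1) * (2 * (r * w) + 1) := by
          refine card_le_of_rotate_mem_rectangle β 0 0 hr (by positivity) F fun ξ hξ => ?_
          obtain ⟨hle, δ, ⟨hδ₀, hδw⟩, hξrot⟩ := hrot ξ hξ
          have hcos : 0 ≤ cos δ :=
            cos_nonneg_of_mem_Icc ⟨by linarith [pi_pos], by linarith [pi_gt_three]⟩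
          have hsin : sin δ ≤ w := (sin_le hδ₀).trans hδw
          have hn := znorm_nonneg ξ
          rw [hξrot]
          refine ⟨⟨by positivity, ?_⟩, ⟨?_, ?_⟩⟩
          · nlinarith [cos_le_one δ]
          · exact mul_nonneg hn (sin_nonneg_of_nonneg_of_le_pi hδ₀ (by linarith [pi_gt_three]))
          · nlinarith [sin_le_one δ]
      _ ≤ (4 * r + 1) * (4 * r * w + 1) := by nlinarith [mul_nonneg hr hw.le]
  · calc (#F : ℝ) ≤ (2 * (2 * r) + 1) * (2 * (2 * r) + 1) := by
          refine card_le_of_rotate_mem_rectangle β (-r) (-r) (by positivity) (by positivity) F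
            fun ξ hξ => ?_
          obtain ⟨hle, δ, -, hξrot⟩ := hrot ξ hξ
          have hn := znorm_nonneg ξ
          rw [hξrot]
          constructor <;> constructor <;>
            nlinarith [neg_one_le_cos δ, cos_le_one δ, neg_one_le_sin δ, sin_le_one δ]
      _ ≤ (4 * r + 1) * (4 * r * w + 1) := by nlinarith [mul_le_mul_of_nonneg_left hw1.le hr]

noncomputable def dyadicIndex (ξ : ℤ × ℤ) : ℕ := Nat.log 2 ⌊znorm ξ⌋₊

lemma two_pow_dyadicIndex_le {ξ : ℤ × ℤ} (h : ξ ≠ 0) : (2 : ℝ) ^ dyadicIndex ξ ≤ znorm ξ := by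
  have := Nat.pow_log_le_self 2 (Nat.floor_pos.mpr (one_le_znorm h)).ne'
  exact_mod_cast (Nat.le_floor_iff (znorm_nonneg ξ)).mp this

lemma znorm_lt_two_pow_dyadicIndex_succ (ξ : ℤ × ℤ) : znorm ξ < 2 ^ (dyadicIndex ξ + 1) := by
  have := Nat.lt_pow_succ_log_self one_lt_two ⌊znorm ξ⌋₊
  exact_mod_cast (Nat.floor_lt (znorm_nonneg ξ)).mp this

lemma dyadicIndex_le {ξ : ℤ × ℤ} {R : ℝ} (h : znorm ξ ≤ R) : dyadicIndex ξ ≤ Nat.log 2 ⌊R⌋₊ :=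
  Nat.log_mono_right (Nat.floor_mono h)

lemma two_rpow_div_two_rpow_sub_one_pos {s : ℝ} (hs : 0 < s) : 0 < (2 : ℝ) ^ s / (2 ^ s - 1) :=
  div_pos (by positivity) (sub_pos.mpr (one_lt_rpow one_lt_two hs))

lemma sum_range_two_pow_rpow_le {s : ℝ} (hs : 0 < s) (K : ℕ) :
    ∑ j ∈ range (K + 1), ((2 : ℝ) ^ j) ^ s ≤ 2 ^ s / (2 ^ s - 1) * ((2 : ℝ) ^ K) ^ s := by
  have hc : 1 < (2 : ℝ) ^ s := one_lt_rpow one_lt_two hs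
  simp only [← rpow_pow_comm zero_le_two]
  rw [geom_sum_eq hc.ne', div_mul_eq_mul_div, ← pow_succ']
  gcongr
  linarith

lemma sum_shell_rpow_neg_le {a β w t : ℝ} (ha : 0 ≤ a) (hw : 0 < w) (ht : 1 ≤ t)
    (S : Finset (ℤ × ℤ)) (hS : ↑S ⊆ latticeSector β w (2 * t)) (hlow : ∀ ξ ∈ S, t ≤ znorm ξ) :
    ∑ ξ ∈ S, znorm ξ ^ (-a) ≤ 72 * w * t ^ (2 - a) + 9 * t ^ (1 - a) := by
  have ht₀ : 0 < t := by linarith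
  have hcard := card_le_of_subset_latticeSector hw (by positivity) S hS
  calc ∑ ξ ∈ S, znorm ξ ^ (-a) ≤ #S * t ^ (-a) := by
        rw [← nsmul_eq_mul]
        exact sum_le_card_nsmul _ _ _ fun ξ hξ =>
          rpow_le_rpow_of_nonpos ht₀ (hlow ξ hξ) (neg_nonpos.mpr ha)
    _ ≤ (72 * w * t ^ 2 + 9 * t) * t ^ (-a) := by
        gcongr
        nlinarith [mul_le_mul_of_nonneg_left ht (mul_nonneg ht₀.le hw.le)]
    _ = 72 * w * t ^ (2 - a) + 9 * t ^ (1 - a) := by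
        rw [sub_eq_add_neg, sub_eq_add_neg, rpow_add ht₀, rpow_add ht₀, rpow_two, rpow_one]
        ring

lemma sum_rpow_neg_le_of_subset_latticeSector {a β w R : ℝ} (ha₀ : 0 ≤ a) (ha₁ : a < 1)
    (hw : 0 < w) (hR : 1 ≤ R) (F : Finset (ℤ × ℤ)) (hF : ↑F ⊆ latticeSector β w R) :
    ∑ ξ ∈ F, znorm ξ ^ (-a) ≤
      72 * (2 ^ (2 - a) / (2 ^ (2 - a) - 1)) * w * R ^ (2 - a) +
        9 * (2 ^ (1 - a) / (2 ^ (1 - a) - 1)) * R ^ (1 - a) := by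
  set K := Nat.log 2 ⌊R⌋₊
  have hmaps : ∀ ξ ∈ F, dyadicIndex ξ ∈ range (K + 1) := fun ξ hξ =>
    mem_range.mpr (Nat.lt_succ_of_le (dyadicIndex_le (hF hξ).2.1))
  have hshell : ∀ j ∈ range (K + 1), ∑ ξ ∈ F with dyadicIndex ξ = j, znorm ξ ^ (-a) ≤
      72 * w * ((2 : ℝ) ^ j) ^ (2 - a) + 9 * ((2 : ℝ) ^ j) ^ (1 - a) := by
    intro j _
    refine sum_shell_rpow_neg_le (β := β) ha₀ hw (one_le_pow₀ one_le_two) _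
      (fun ξ hξ => ?_) fun ξ hξ => ?_
    · obtain ⟨hξF, rfl⟩ := mem_filter.mp hξ
      obtain ⟨hne, -, hθ⟩ := hF hξF
      refine ⟨hne, ?_, hθ⟩
      rw [← pow_succ']
      exact (znorm_lt_two_pow_dyadicIndex_succ ξ).le
    · obtain ⟨hξF, rfl⟩ := mem_filter.mp hξ
      exact two_pow_dyadicIndex_le (hF hξF).1
  have h2K : (2 : ℝ) ^ K ≤ R := by
    have := Nat.pow_log_le_self 2 (Nat.floor_pos.mpr hR).ne'
    exact_mod_cast (Nat.le_floor_iff (by linarith)).mp this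
  have hc₁ := (two_rpow_div_two_rpow_sub_one_pos (by linarith : 0 < 2 - a)).le
  have hc₂ := (two_rpow_div_two_rpow_sub_one_pos (by linarith : 0 < 1 - a)).le
  rw [← sum_fiberwise_of_maps_to hmaps]
  calc _ ≤ ∑ j ∈ range (K + 1), (72 * w * ((2 : ℝ) ^ j) ^ (2 - a) + 9 * ((2 : ℝ) ^ j) ^ (1 - a)) :=
        sum_le_sum hshell
    _ = 72 * w * ∑ j ∈ range (K + 1), ((2 : ℝ) ^ j) ^ (2 - a) +
          9 * ∑ j ∈ range (K + 1), ((2 : ℝ) ^ j) ^ (1 - a) := by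
        rw [sum_add_distrib, mul_sum, mul_sum]
    _ ≤ 72 * w * (2 ^ (2 - a) / (2 ^ (2 - a) - 1) * ((2 : ℝ) ^ K) ^ (2 - a)) +
          9 * (2 ^ (1 - a) / (2 ^ (1 - a) - 1) * ((2 : ℝ) ^ K) ^ (1 - a)) := by
        gcongr <;> exact sum_range_two_pow_rpow_le (by linarith) K
    _ ≤ 72 * w * (2 ^ (2 - a) / (2 ^ (2 - a) - 1) * R ^ (2 - a)) +
          9 * (2 ^ (1 - a) / (2 ^ (1 - a) - 1) * R ^ (1 - a)) := by
        gcongr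
        linarith
    _ = _ := by ring

lemma one_div_two_mul_rpow_le {ε s : ℝ} (hε : 0 < ε) (hs : 0 ≤ s) :
    (1 / (2 * ε)) ^ s ≤ ε ^ (-s) := by
  rw [rpow_neg hε.le, ← inv_rpow hε.le, one_div]
  exact rpow_le_rpow (by positivity) (by gcongr; linarith) hs

lemma finsum_rpow_neg_le_of_subset_latticeSector {a β w R : ℝ} (ha₀ : 0 ≤ a) (ha₁ : a < 1)
    (hw : 0 < w) (hR : 1 ≤ R) {s : Set (ℤ × ℤ)} (hs : s ⊆ latticeSector β w R) :
    ∑ᶠ ξ ∈ s, znorm ξ ^ (-a) ≤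
      72 * (2 ^ (2 - a) / (2 ^ (2 - a) - 1)) * w * R ^ (2 - a) +
        9 * (2 ^ (1 - a) / (2 ^ (1 - a) - 1)) * R ^ (1 - a) := by
  have hfin := (finite_setOf_znorm_le R).subset fun ξ hξ => (hs hξ).2.1
  rw [finsum_mem_eq_finite_toFinset_sum _ hfin]
  exact sum_rpow_neg_le_of_subset_latticeSector ha₀ ha₁ hw hR _ (by simpa using hs)

/-- Lemma C.6 of the paper: for `1/2 < a < 1` there is `C > 0` (depending only on `a`)
such that for all `ε ∈ (0,1/2)` and every arc of polar angles `[β, β + w]` of length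
`w > 0`, the sum of `‖ξ‖^{-a}` over primitive lattice vectors with `0 < ‖ξ‖ ≤ 1/(2ε)`
whose polar angle lies in the arc is at most
`C (ε^{a-2} w + ε^{a-1} log(1/ε) + ε^{a-1} w⁻¹)`. -/
theorem sector_sum_bound (a : ℝ) (ha1 : 1 / 2 < a) (ha2 : a < 1) :
    ∃ C : ℝ, 0 < C ∧ ∀ ε : ℝ, 0 < ε → ε < 1 / 2 → ∀ β w : ℝ, 0 < w →
      (∑ᶠ ξ ∈ {ξ : ℤ × ℤ | IsPrimitive ξ ∧ znorm ξ ≤ 1 / (2 * ε) ∧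
            ∃ θ : ℝ, β ≤ θ ∧ θ ≤ β + w ∧
              (ξ.1 : ℝ) = znorm ξ * Real.cos θ ∧ (ξ.2 : ℝ) = znorm ξ * Real.sin θ},
          znorm ξ ^ (-a)) ≤
        C * (ε ^ (a - 2) * w + ε ^ (a - 1) * Real.log (1 / ε) + ε ^ (a - 1) * w⁻¹) := by
  set A := 72 * ((2 : ℝ) ^ (2 - a) / (2 ^ (2 - a) - 1))
  set B := 9 * ((2 : ℝ) ^ (1 - a) / (2 ^ (1 - a) - 1))
  have hA : 0 < A := mul_pos (by norm_num) (two_rpow_div_two_rpow_sub_one_pos (by linarith))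
  have hB : 0 < B := mul_pos (by norm_num) (two_rpow_div_two_rpow_sub_one_pos (by linarith))
  have hlog2 : 0 < log 2 := log_pos one_lt_two
  refine ⟨A + B / log 2, by positivity, fun ε hε hε2 β w hw => ?_⟩
  set R := 1 / (2 * ε)
  have hR₁ : 1 ≤ R := by rw [le_div_iff₀ (by linarith)]; linarith
  have hlog : log 2 ≤ log (1 / ε) := log_le_log two_pos (by rw [le_div_iff₀ hε]; linarith)
  have hX : 0 ≤ ε ^ (a - 2) * w := by positivity
  have hY : 0 ≤ ε ^ (a - 1) := by positivity
  calc _ ≤ A * w * R ^ (2 - a) + B * R ^ (1 - a) :=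
        finsum_rpow_neg_le_of_subset_latticeSector (by linarith) ha2 hw hR₁
          fun _ hξ => ⟨hξ.1.1, hξ.2⟩
    _ ≤ A * (ε ^ (a - 2) * w) + B / log 2 * (ε ^ (a - 1) * log (1 / ε)) := by
        have h₁ := one_div_two_mul_rpow_le hε (by linarith : 0 ≤ 2 - a)
        have h₂ := one_div_two_mul_rpow_le hε (by linarith : 0 ≤ 1 - a)
        rw [neg_sub] at h₁ h₂
        have h₃ : B * ε ^ (a - 1) ≤ B / log 2 * (ε ^ (a - 1) * log (1 / ε)) := by
          rw [div_mul_eq_mul_div, le_div_iff₀ hlog2]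
          nlinarith [mul_le_mul_of_nonneg_left hlog (mul_nonneg hB.le hY)]
        nlinarith [mul_le_mul_of_nonneg_left h₁ (mul_nonneg hA.le hw.le),
          mul_le_mul_of_nonneg_left h₂ hB.le]
    _ ≤ _ := by
        have hZ : 0 ≤ ε ^ (a - 1) * log (1 / ε) := mul_nonneg hY (hlog2.le.trans hlog)
        have hW : 0 ≤ ε ^ (a - 1) * w⁻¹ := by positivity
        nlinarith [mul_nonneg hA.le hZ, mul_nonneg hA.le hW, mul_nonneg (div_pos hB hlog2).le hX,
          mul_nonneg (div_pos hB hlog2).le hW]
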